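/- Let β > 0, θ > 0, λ > 0, c > 0, b > 0 and let s₃ > 0 > s₄ solve c s² + (θ+λ−βc)s − βθ = 0. Set K = (λ/β) / [(c s₃+θ) e^{s₃ b} − (c s₄+θ) e^{s₄ b}] and F(x) = K(e^{s₃x} − e^{s₄x}) for 0 ≤ x ≤ b. Then F satisfies, for all 0 ≤ x ≤ b: c F'(x) + (θ+λ) F(x) − λ ∫ₓ^b F(u) β e^{−β(u−x)} du − λ e^{−β(b−x)}/β − λ F(b) e^{−β(b−x)} = 0, assuming the denominator (c s₃+θ) e^{s₃ b} − (c s₄+θ) e^{s₄ b} is nonzero. -/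

import Mathlib

open Real Set MeasureTheory

/-! For a root `s` of the characteristic equation, the left-hand side of the equation applied to
`e^{s x}` (without the two boundary terms) is a multiple of `e^{-β(b-x)}`: the coefficient of
`e^{s x}` is `(c s + θ + λ) + λβ/(s - β)`, which vanishes since the characteristic polynomial is
`(c s + θ + λ)(s - β) + λβ`. By linearity the whole left-hand side for `F` collapses to
`e^{-β(b-x)} (K D - λ/β)` with `D` the denominator, which is zero by the choice of `K`. -/

theorem integral_Ioc_exp_mul_exp_neg {s β x b : ℝ} (hs : s ≠ β) (hxb : x ≤ b) :
    ∫ u in Ioc x b, exp (s * u) * (β * exp (-β * (u - x)))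
      = β / (s - β) * (exp (s * b) * exp (-β * (b - x)) - exp (s * x)) := by
  have hsβ : s - β ≠ 0 := sub_ne_zero.mpr hs
  have hG : ∀ u, HasDerivAt (fun u => β / (s - β) * (exp (s * u) * exp (-β * (u - x))))
      (exp (s * u) * (β * exp (-β * (u - x)))) u := by
    intro u
    refine ((((hasDerivAt_id u).const_mul s).exp.mul
      (((hasDerivAt_id u).sub_const x).const_mul (-β)).exp).const_mul (β / (s - β))).congr_deriv ?_
    simp only [id, mul_one]
    field_simp
    ring
  rw [← intervalIntegral.integral_of_le hxb,
    intervalIntegral.integral_eq_sub_of_hasDerivAt (fun u _ => hG u)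
      (Continuous.intervalIntegrable (by fun_prop) x b)]
  simp only [sub_self, mul_zero, exp_zero, mul_one]
  ring

theorem ide_exp_eq_of_char_root {c θ lam β s b x : ℝ} (hlam : lam ≠ 0) (hβ : β ≠ 0)
    (hs : c * s ^ 2 + (θ + lam - β * c) * s - β * θ = 0) (hxb : x ≤ b) :
    c * (s * exp (s * x)) + (θ + lam) * exp (s * x)
        - lam * ∫ u in Ioc x b, exp (s * u) * (β * exp (-β * (u - x)))
      = (c * s + θ + lam) * exp (s * b) * exp (-β * (b - x)) := by
  have hsβ : s ≠ β := by
    rintro rfl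
    exact mul_ne_zero hlam hβ (by linear_combination hs)
  rw [integral_Ioc_exp_mul_exp_neg hsβ hxb]
  have : s - β ≠ 0 := sub_ne_zero.mpr hsβ
  generalize exp (-β * (b - x)) = E
  field_simp
  linear_combination (exp (s * x) - exp (s * b) * E) * hs

theorem barrier_value_solves_ide_general (θ lam β c b s₃ s₄ : ℝ)
    (hlam : 0 < lam) (hβ : 0 < β)
    (h₃ : c * s₃ ^ 2 + (θ + lam - β * c) * s₃ - β * θ = 0)
    (h₄ : c * s₄ ^ 2 + (θ + lam - β * c) * s₄ - β * θ = 0)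
    (hden : (c * s₃ + θ) * Real.exp (s₃ * b) - (c * s₄ + θ) * Real.exp (s₄ * b) ≠ 0) :
    let K := (lam / β) /
      ((c * s₃ + θ) * Real.exp (s₃ * b) - (c * s₄ + θ) * Real.exp (s₄ * b))
    let F : ℝ → ℝ := fun x => K * (Real.exp (s₃ * x) - Real.exp (s₄ * x))
    ∀ x ∈ Set.Icc (0 : ℝ) b,
      c * deriv F x + (θ + lam) * F x
        - lam * (∫ u in Set.Ioc x b, F u * (β * Real.exp (-β * (u - x))))
        - lam * Real.exp (-β * (b - x)) / β
        - lam * F b * Real.exp (-β * (b - x)) = 0 := by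
  intro K F x hx
  have hF' : HasDerivAt F (K * (s₃ * exp (s₃ * x) - s₄ * exp (s₄ * x))) x := by
    refine ((((hasDerivAt_id x).const_mul s₃).exp.sub
      ((hasDerivAt_id x).const_mul s₄).exp).const_mul K).congr_deriv ?_
    simp only [id, mul_one]
    ring
  have hint : ∫ u in Ioc x b, F u * (β * exp (-β * (u - x)))
      = K * ((∫ u in Ioc x b, exp (s₃ * u) * (β * exp (-β * (u - x))))
        - ∫ u in Ioc x b, exp (s₄ * u) * (β * exp (-β * (u - x)))) := by
    rw [← integral_sub (Continuous.integrableOn_Ioc (by fun_prop))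
      (Continuous.integrableOn_Ioc (by fun_prop)), ← integral_const_mul]
    congr 1 with u
    ring
  have hKD : K * ((c * s₃ + θ) * exp (s₃ * b) - (c * s₄ + θ) * exp (s₄ * b)) = lam / β :=
    div_mul_cancel₀ _ hden
  rw [hF'.deriv, hint]
  linear_combination K * ide_exp_eq_of_char_root hlam.ne' hβ.ne' h₃ hx.2
    - K * ide_exp_eq_of_char_root hlam.ne' hβ.ne' h₄ hx.2 + exp (-β * (b - x)) * hKD

/-- The barrier-strategy return function
`F(x) = K(e^{s₃x} − e^{s₄x})`, with
`K = (λ/β)/[(cs₃+θ)e^{s₃b} − (cs₄+θ)e^{s₄b}]`, satisfies the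
integro-differential equation (2.2.9) on `[0,b]`. -/
theorem barrier_value_solves_ide (θ lam β c b s₃ s₄ : ℝ)
    (hθ : 0 < θ) (hlam : 0 < lam) (hβ : 0 < β) (hc : 0 < c) (hb : 0 < b)
    (hs₃ : 0 < s₃) (hs₄ : s₄ < 0)
    (h₃ : c * s₃ ^ 2 + (θ + lam - β * c) * s₃ - β * θ = 0)
    (h₄ : c * s₄ ^ 2 + (θ + lam - β * c) * s₄ - β * θ = 0)
    (hden : (c * s₃ + θ) * Real.exp (s₃ * b) - (c * s₄ + θ) * Real.exp (s₄ * b) ≠ 0) :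
    let K := (lam / β) /
      ((c * s₃ + θ) * Real.exp (s₃ * b) - (c * s₄ + θ) * Real.exp (s₄ * b))
    let F : ℝ → ℝ := fun x => K * (Real.exp (s₃ * x) - Real.exp (s₄ * x))
    ∀ x ∈ Set.Icc (0 : ℝ) b,
      c * deriv F x + (θ + lam) * F x
        - lam * (∫ u in Set.Ioc x b, F u * (β * Real.exp (-β * (u - x))))
        - lam * Real.exp (-β * (b - x)) / β
        - lam * F b * Real.exp (-β * (b - x)) = 0 :=
  barrier_value_solves_ide_general θ lam β c b s₃ s₄ hlam hβ h₃ h₄ hden
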